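/- arXiv:1401.6392 — 2 statements merged into one kernel-verified Lean document; each statement's English description precedes it below -/
import Mathlib

section
/- Let p₁, p₂ ∈ ℝ[x,y,z] be nonzero polynomials with no common irreducible factor. Then the number of lines in ℝ³ simultaneously contained in the zero set of p₁ and the zero set of p₂ is at most (deg p₁)·(deg p₂). -/
/-!
If there were more than `k = deg p₁ · deg p₂` common lines, pick `k + 1` of them and `k² + 1`
points on each, off the other lines. Each of these `N = (k + 1)(k² + 1)` points is cut out from
the others by a product of affine forms of degree at most `D = k + k²`, so evaluation at them
maps `P_D`, the polynomials of degree `≤ D`, onto `ℝ^N`. The kernel contains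
`p₁ · P_{D - deg p₁} + p₂ · P_{D - deg p₂}`, and as `p₁, p₂` are coprime the two summands meet in
`p₁ p₂ · P_{D - deg p₁ - deg p₂}`. Since `dim P_e = (e + 3).choose 3`, this forces
`N ≤ k (D + 1) = N - 1`.
-/

open MvPolynomial

/-- A line in `ℝ³`, as a set of points. -/
def IsLine (l : Set (Fin 3 → ℝ)) : Prop :=
  ∃ a v : Fin 3 → ℝ, v ≠ 0 ∧ l = {x | ∃ t : ℝ, x = a + t • v}

theorem Set.finite_and_ncard_le_of_forall_finset_card_le {α : Type*} {s : Set α} {N : ℕ}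
    (h : ∀ t : Finset α, ↑t ⊆ s → t.card ≤ N) : s.Finite ∧ s.ncard ≤ N := by
  have hfin : s.Finite := by
    by_contra hinf
    obtain ⟨t, hts, ht⟩ := Set.Infinite.exists_subset_card_eq hinf (N + 1)
    have := h t hts
    omega
  refine ⟨hfin, ?_⟩
  rw [← hfin.coe_toFinset, Set.ncard_coe_finset]
  exact h _ hfin.coe_toFinset.subset

theorem Submodule.finrank_add_finrank_le_of_le_ker {K M N : Type*} [Field K] [AddCommGroup M]
    [Module K M] [AddCommGroup N] [Module K N] {V W : Submodule K M} [FiniteDimensional K V]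
    (f : M →ₗ[K] N) (hWV : W ≤ V) (hWf : W ≤ LinearMap.ker f) (hf : V.map f = ⊤) :
    Module.finrank K W + Module.finrank K N ≤ Module.finrank K V := by
  have hrank := LinearMap.finrank_range_add_finrank_ker (f.domRestrict V)
  rw [LinearMap.range_domRestrict, hf, finrank_top] at hrank
  have hW : Module.finrank K W ≤ Module.finrank K (LinearMap.ker (f.domRestrict V)) := by
    rw [← (Submodule.comapSubtypeEquivOfLe hWV).finrank_eq]
    exact Submodule.finrank_mono fun x hx => by simpa using hWf hx
  omega

theorem Nat.add_three_choose_three_mul_six (n : ℕ) :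
    (n + 3).choose 3 * 6 = (n + 1) * (n + 2) * (n + 3) := by
  have h : (n + 3).descFactorial 3 = (n + 1) * ((n + 2) * ((n + 3) * 1)) := rfl
  rw [Nat.descFactorial_eq_factorial_mul_choose, mul_comm] at h
  exact h.trans (by ring)

theorem Nat.choose_three_second_difference_le {a b D : ℕ} (ha : 1 ≤ a) (hb : 1 ≤ b)
    (hD : a + b ≤ D) :
    (D + 3).choose 3 + (D - a - b + 3).choose 3 ≤
      (D - a + 3).choose 3 + (D - b + 3).choose 3 + a * b * (D + 1) := by
  obtain ⟨e, rfl⟩ := Nat.exists_eq_add_of_le hD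
  rw [show a + b + e - a - b = e by omega, show a + b + e - a = b + e by omega,
    show a + b + e - b = a + e by omega]
  nlinarith [Nat.mul_le_mul ha hb, add_three_choose_three_mul_six (a + b + e),
    add_three_choose_three_mul_six e, add_three_choose_three_mul_six (b + e),
    add_three_choose_three_mul_six (a + e)]

namespace MvPolynomial

theorem totalDegree_pos_of_eval_eq_zero {σ R : Type*} [CommSemiring R] {p : MvPolynomial σ R}
    (hp : p ≠ 0) {x : σ → R} (hx : eval x p = 0) : 0 < p.totalDegree := by
  by_contra! h
  have hC := totalDegree_eq_zero_iff_eq_C.mp (Nat.le_zero.mp h)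
  rw [hC, eval_C] at hx
  exact hp (by rw [hC, hx, C_0])

variable {σ K : Type*} [Field K]

def SeparatedInDegree (D : ℕ) (S : Set (σ → K)) (q : σ → K) : Prop :=
  ∃ p : MvPolynomial σ K, p.totalDegree ≤ D ∧ (∀ x ∈ S, eval x p = 0) ∧ eval q p ≠ 0

namespace SeparatedInDegree

variable {D D' : ℕ} {S T : Set (σ → K)} {q : σ → K}

theorem mono (h : SeparatedInDegree D S q) (hD : D ≤ D') (hTS : T ⊆ S) :
    SeparatedInDegree D' T q := by
  obtain ⟨p, hp, hpS, hpq⟩ := h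
  exact ⟨p, hp.trans hD, fun x hx => hpS x (hTS hx), hpq⟩

theorem union (hS : SeparatedInDegree D S q) (hT : SeparatedInDegree D' T q) :
    SeparatedInDegree (D + D') (S ∪ T) q := by
  obtain ⟨p, hp, hpS, hpq⟩ := hS
  obtain ⟨r, hr, hrT, hrq⟩ := hT
  refine ⟨p * r, (totalDegree_mul p r).trans (add_le_add hp hr), ?_, by simp [hpq, hrq]⟩
  rintro x (hx | hx) <;> simp [hpS x, hrT x, hx]

theorem biUnion {ι : Type*} (s : Finset ι) {S : ι → Set (σ → K)}
    (h : ∀ i ∈ s, SeparatedInDegree D (S i) q) :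
    SeparatedInDegree (s.card * D) (⋃ i ∈ s, S i) q := by
  classical
  induction s using Finset.induction_on with
  | empty => exact ⟨1, by simp, by simp, by simp⟩
  | insert i s hi ih =>
    rw [Finset.card_insert_of_notMem hi, Finset.set_biUnion_insert, add_mul, one_mul, add_comm]
    exact (h i (Finset.mem_insert_self i s)).union
      (ih fun j hj => h j (Finset.mem_insert_of_mem hj))

end SeparatedInDegree

theorem separatedInDegree_singleton {x q : σ → K} (h : x ≠ q) : SeparatedInDegree 1 {x} q := by
  obtain ⟨i, hi⟩ := Function.ne_iff.mp h
  refine ⟨X i - C (x i), (totalDegree_sub_C_le _ _).trans (totalDegree_X i).le, by simp, ?_⟩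
  simpa [sub_eq_zero] using hi.symm

theorem separatedInDegree_one_of_linearMap [Fintype σ] (f : (σ → K) →ₗ[K] K) {c : K}
    {q : σ → K} (hq : f q ≠ c) : SeparatedInDegree 1 {x | f x = c} q := by
  classical
  have heval : ∀ x, eval x (∑ i, C (f (Pi.single i 1)) * X i - C c) = f x - c := by
    intro x
    rw [LinearMap.pi_apply_eq_sum_univ f x]
    simp only [map_sub, map_sum, map_mul, eval_C, eval_X, mul_comm, smul_eq_mul]
    congr! with i - j
    simp [Pi.single_apply, eq_comm]
  refine ⟨_, ?_, fun x hx => by rw [heval, hx, sub_self], by rwa [heval, sub_ne_zero]⟩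
  refine (totalDegree_sub_C_le _ _).trans
    ((totalDegree_finsetSum _ _).trans (Finset.sup_le fun i _ => ?_))
  exact (totalDegree_mul _ _).trans (by simp [totalDegree_C, totalDegree_X])

noncomputable def evalOn (Q : Finset (σ → K)) : MvPolynomial σ K →ₗ[K] (Q → K) :=
  LinearMap.funLeft K K (Subtype.val : Q → σ → K) ∘ₗ evalₗ K σ

@[simp]
theorem evalOn_apply (Q : Finset (σ → K)) (p : MvPolynomial σ K) (x : Q) :
    evalOn Q p x = eval (x : σ → K) p :=
  rfl

theorem range_mulLeft_le_ker_evalOn {Q : Finset (σ → K)} {p : MvPolynomial σ K}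
    (hp : ∀ x ∈ Q, eval x p = 0) :
    LinearMap.range (LinearMap.mulLeft K p) ≤ LinearMap.ker (evalOn Q) := by
  rintro _ ⟨r, rfl⟩
  ext x
  simp [hp x x.2]

theorem map_evalOn_restrictTotalDegree_eq_top {D : ℕ} {Q : Finset (σ → K)}
    (hsep : ∀ q ∈ Q, SeparatedInDegree D (↑Q \ {q}) q) :
    (restrictTotalDegree σ K D).map (evalOn Q) = ⊤ := by
  classical
  rw [eq_top_iff, ← (Pi.basisFun K Q).span_eq, Submodule.span_le]
  rintro _ ⟨q, rfl⟩
  obtain ⟨p, hpD, hpQ, hpq⟩ := hsep q q.2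
  refine ⟨(eval (q : σ → K) p)⁻¹ • p,
    Submodule.smul_mem _ _ ((mem_restrictTotalDegree _ _ _).mpr hpD), ?_⟩
  ext x
  rcases eq_or_ne x q with rfl | hx
  · simp [hpq]
  · simp [hx, hpQ x ⟨x.2, Subtype.coe_ne_coe.mpr hx⟩]

theorem map_mulLeft_restrictTotalDegree_le {p : MvPolynomial σ K} {k D : ℕ}
    (h : p.totalDegree + k ≤ D) :
    (restrictTotalDegree σ K k).map (LinearMap.mulLeft K p) ≤ restrictTotalDegree σ K D := by
  rintro _ ⟨r, hr, rfl⟩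
  rw [SetLike.mem_coe, mem_restrictTotalDegree] at hr
  rw [mem_restrictTotalDegree, LinearMap.mulLeft_apply]
  exact (totalDegree_mul p r).trans (by omega)

theorem finrank_map_mulLeft {p : MvPolynomial σ K} (hp : p ≠ 0)
    (W : Submodule K (MvPolynomial σ K)) :
    Module.finrank K (W.map (LinearMap.mulLeft K p)) = Module.finrank K W :=
  (LinearEquiv.finrank_eq (Submodule.equivMapOfInjective _ (mul_right_injective₀ hp) W)).symm

theorem map_mulLeft_inf_range_mulLeft_le {p₁ p₂ : MvPolynomial σ K} (h₂ : p₂ ≠ 0)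
    (hrp : IsRelPrime p₁ p₂) (k : ℕ) :
    (restrictTotalDegree σ K k).map (LinearMap.mulLeft K p₁) ⊓
        LinearMap.range (LinearMap.mulLeft K p₂) ≤
      (restrictTotalDegree σ K (k - p₂.totalDegree)).map (LinearMap.mulLeft K (p₁ * p₂)) := by
  rintro _ ⟨⟨y, hy, rfl⟩, z, hz⟩
  simp only [LinearMap.mulLeft_apply] at hz ⊢
  obtain ⟨u, rfl⟩ : p₂ ∣ y := hrp.symm.dvd_of_dvd_mul_left ⟨z, hz.symm⟩
  refine ⟨u, ?_, by simp⟩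
  rw [SetLike.mem_coe, mem_restrictTotalDegree] at hy ⊢
  rcases eq_or_ne u 0 with rfl | hu
  · simp
  · rw [totalDegree_mul_of_isDomain h₂ hu] at hy
    omega

theorem card_add_finrank_le_of_separatedInDegree [Finite σ] {p₁ p₂ : MvPolynomial σ K}
    (h₁ : p₁ ≠ 0) (h₂ : p₂ ≠ 0) (hrp : IsRelPrime p₁ p₂) {D : ℕ}
    (hD : p₁.totalDegree + p₂.totalDegree ≤ D) {Q : Finset (σ → K)}
    (hQ₁ : ∀ x ∈ Q, eval x p₁ = 0) (hQ₂ : ∀ x ∈ Q, eval x p₂ = 0)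
    (hsep : ∀ q ∈ Q, SeparatedInDegree D (↑Q \ {q}) q) :
    Q.card + Module.finrank K (restrictTotalDegree σ K (D - p₁.totalDegree)) +
        Module.finrank K (restrictTotalDegree σ K (D - p₂.totalDegree)) ≤
      Module.finrank K (restrictTotalDegree σ K D) +
        Module.finrank K
          (restrictTotalDegree σ K (D - p₁.totalDegree - p₂.totalDegree)) := by
  set I₁ := (restrictTotalDegree σ K (D - p₁.totalDegree)).map (LinearMap.mulLeft K p₁)
  set I₂ := (restrictTotalDegree σ K (D - p₂.totalDegree)).map (LinearMap.mulLeft K p₂)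
  have hI : I₁ ⊔ I₂ ≤ restrictTotalDegree σ K D :=
    sup_le (map_mulLeft_restrictTotalDegree_le (by omega))
      (map_mulLeft_restrictTotalDegree_le (by omega))
  have hker : I₁ ⊔ I₂ ≤ LinearMap.ker (evalOn Q) :=
    sup_le (LinearMap.map_le_range.trans (range_mulLeft_le_ker_evalOn hQ₁))
      (LinearMap.map_le_range.trans (range_mulLeft_le_ker_evalOn hQ₂))
  have hsup := Submodule.finrank_add_finrank_le_of_le_ker (evalOn Q) hI hker
    (map_evalOn_restrictTotalDegree_eq_top hsep)
  have hinf : Module.finrank K ↥(I₁ ⊓ I₂) ≤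
      Module.finrank K (restrictTotalDegree σ K (D - p₁.totalDegree - p₂.totalDegree)) := by
    refine (Submodule.finrank_mono ((inf_le_inf_left _ LinearMap.map_le_range).trans
      (map_mulLeft_inf_range_mulLeft_le h₂ hrp _))).trans ?_
    rw [finrank_map_mulLeft (mul_ne_zero h₁ h₂)]
  have hmodular := Submodule.finrank_sup_add_finrank_inf_eq I₁ I₂
  rw [finrank_map_mulLeft h₁, finrank_map_mulLeft h₂] at hmodular
  rw [Module.finrank_fintype_fun_eq_card, Fintype.card_coe] at hsup
  omega

theorem finrank_restrictTotalDegree_fin_three (N : ℕ) :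
    Module.finrank K (restrictTotalDegree (Fin 3) K N) = (N + 3).choose 3 := by
  classical
  have hset : {s : Fin 3 →₀ ℕ | (s.sum fun _ e => e) ≤ N} =
      ↑((Finset.range (N + 1)).biUnion (Finset.univ : Finset (Fin 3)).finsuppAntidiag) := by
    ext s
    simp [Finsupp.sum_fintype]
  rw [restrictTotalDegree, Module.finrank_eq_nat_card_basis (basisRestrictSupport K _), hset,
    Nat.card_coe_set_eq, Set.ncard_coe_finset, Finset.card_biUnion]
  · simp only [Finset.card_finsuppAntidiag_nat_eq_choose, Finset.card_univ, Fintype.card_fin]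
    rw [← Nat.sum_range_add_choose]
    refine Finset.sum_congr rfl fun k _ => ?_
    rw [show 3 + k - 1 = k + 2 by omega, Nat.choose_symm_add]
  · intro i _ j _ hij
    exact Finset.disjoint_left.mpr fun s hi hj => hij <| by
      rw [Finset.mem_finsuppAntidiag] at hi hj
      rw [← hi.1, hj.1]

end MvPolynomial

namespace IsLine

variable {l l' : Set (Fin 3 → ℝ)}

theorem infinite (hl : IsLine l) : l.Infinite := by
  obtain ⟨a, v, hv, rfl⟩ := hl
  have hrange : {x | ∃ t : ℝ, x = a + t • v} = Set.range fun t : ℝ => a + t • v := by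
    ext x
    simp [eq_comm]
  rw [hrange]
  exact Set.infinite_range_of_injective ((add_right_injective a).comp (smul_left_injective ℝ hv))

theorem eq_setOf_of_mem (hl : IsLine l) {x y : Fin 3 → ℝ} (hx : x ∈ l) (hy : y ∈ l)
    (hxy : x ≠ y) : l = {z | ∃ s : ℝ, z = x + s • (y - x)} := by
  obtain ⟨a, v, hv, rfl⟩ := hl
  obtain ⟨t₁, rfl⟩ := hx
  obtain ⟨t₂, rfl⟩ := hy
  have hdiff : a + t₂ • v - (a + t₁ • v) = (t₂ - t₁) • v := by
    rw [add_sub_add_left_eq_sub, sub_smul]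
  have ht : t₂ - t₁ ≠ 0 := fun h => hxy (by rw [sub_eq_zero.mp h])
  ext z
  simp only [Set.mem_ofPred_eq, hdiff, smul_smul]
  constructor
  · rintro ⟨t, rfl⟩
    refine ⟨(t - t₁) / (t₂ - t₁), ?_⟩
    rw [div_mul_cancel₀ _ ht, add_assoc, ← add_smul, add_sub_cancel]
  · rintro ⟨s, rfl⟩
    exact ⟨t₁ + s * (t₂ - t₁), by rw [add_smul, add_assoc]⟩

theorem inter_subsingleton (hl : IsLine l) (hl' : IsLine l') (hne : l ≠ l') :
    (l ∩ l').Subsingleton := by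
  intro x hx y hy
  by_contra hxy
  exact hne ((hl.eq_setOf_of_mem hx.1 hy.1 hxy).trans (hl'.eq_setOf_of_mem hx.2 hy.2 hxy).symm)

theorem infinite_diff_biUnion (hl : IsLine l) {L : Finset (Set (Fin 3 → ℝ))}
    (hL : ∀ l' ∈ L, IsLine l') (hlL : l ∉ L) : (l \ ⋃ l' ∈ L, l').Infinite := by
  have hfin : (⋃ l' ∈ L, l ∩ l').Finite :=
    L.finite_toSet.biUnion fun l' hl' =>
      (hl.inter_subsingleton (hL l' hl') fun h => hlL (h ▸ hl')).finite
  refine (hl.infinite.sdiff hfin).mono fun x hx => ⟨hx.1, fun hx' => hx.2 ?_⟩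
  obtain ⟨l', hl', hxl'⟩ := Set.mem_iUnion₂.mp hx'
  exact Set.mem_biUnion hl' ⟨hx.1, hxl'⟩

theorem separatedInDegree (hl : IsLine l) {q : Fin 3 → ℝ} (hq : q ∉ l) :
    SeparatedInDegree 1 l q := by
  obtain ⟨a, v, hv, rfl⟩ := hl
  have hqa : q - a ∉ ℝ ∙ v := by
    rintro hmem
    obtain ⟨t, ht⟩ := Submodule.mem_span_singleton.mp hmem
    exact hq ⟨t, by rw [ht, add_sub_cancel]⟩
  obtain ⟨f, hfq, hfv⟩ := Submodule.exists_le_ker_of_notMem hqa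
  refine (separatedInDegree_one_of_linearMap f (c := f a) ?_).mono le_rfl ?_
  · rwa [map_sub, sub_ne_zero] at hfq
  · rintro _ ⟨t, rfl⟩
    simp [LinearMap.mem_ker.mp (hfv (Submodule.mem_span_singleton_self v))]

end IsLine

theorem exists_finset_separatedInDegree_of_isLine (L : Finset (Set (Fin 3 → ℝ)))
    (hL : ∀ l ∈ L, IsLine l) (m : ℕ) :
    ∃ Q : Finset (Fin 3 → ℝ), Q.card = L.card * m ∧ (∀ x ∈ Q, ∃ l ∈ L, x ∈ l) ∧
      ∀ q ∈ Q, SeparatedInDegree (L.card - 1 + (m - 1)) (↑Q \ {q}) q := by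
  classical
  have hfree : ∀ l ∈ L, (l \ ⋃ l' ∈ L.erase l, l').Infinite := fun l hl =>
    (hL l hl).infinite_diff_biUnion (fun l' hl' => hL l' (Finset.mem_of_mem_erase hl'))
      (Finset.notMem_erase l L)
  choose! P hPsub hPcard using fun l hl => (hfree l hl).exists_subset_card_eq m
  refine ⟨L.biUnion P, ?_, ?_, ?_⟩
  · rw [Finset.card_biUnion, Finset.sum_const_nat hPcard]
    intro l hl l' hl' hne
    refine Finset.disjoint_left.mpr fun x hxl hxl' => (hPsub l' hl' hxl').2 ?_
    exact Set.mem_biUnion (Finset.mem_erase.mpr ⟨hne, hl⟩) (hPsub l hl hxl).1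
  · intro x hx
    obtain ⟨l, hl, hxl⟩ := Finset.mem_biUnion.mp hx
    exact ⟨l, hl, (hPsub l hl hxl).1⟩
  · intro q hq
    obtain ⟨l, hl, hql⟩ := Finset.mem_biUnion.mp hq
    have hlines := SeparatedInDegree.biUnion (D := 1) (L.erase l) fun l' hl' =>
      (hL l' (Finset.mem_of_mem_erase hl')).separatedInDegree
        fun hql' => (hPsub l hl hql).2 (Set.mem_biUnion hl' hql')
    have hpoints := SeparatedInDegree.biUnion (D := 1) ((P l).erase q) fun x hx =>
      separatedInDegree_singleton (Finset.ne_of_mem_erase hx)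
    refine (hlines.union hpoints).mono ?_ ?_
    · rw [Finset.card_erase_of_mem hl, Finset.card_erase_of_mem hql, hPcard l hl, mul_one, mul_one]
    · rintro x ⟨hxQ, hxq⟩
      obtain ⟨l', hl', hxl'⟩ := Finset.mem_biUnion.mp hxQ
      by_cases h : l' = l
      · subst h
        exact Or.inr (Set.mem_biUnion (Finset.mem_erase.mpr ⟨hxq, hxl'⟩) rfl)
      · exact Or.inl (Set.mem_biUnion (Finset.mem_erase.mpr ⟨h, hl'⟩) (hPsub l' hl' hxl').1)

theorem card_le_totalDegree_mul_of_isLine {p₁ p₂ : MvPolynomial (Fin 3) ℝ} (h₁ : p₁ ≠ 0)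
    (h₂ : p₂ ≠ 0) (hrp : IsRelPrime p₁ p₂) (L : Finset (Set (Fin 3 → ℝ)))
    (hL : ∀ l ∈ L, IsLine l ∧ l ⊆ {x | eval x p₁ = 0} ∧ l ⊆ {x | eval x p₂ = 0}) :
    L.card ≤ p₁.totalDegree * p₂.totalDegree := by
  set k := p₁.totalDegree * p₂.totalDegree with hk_def
  by_contra! hlt
  obtain ⟨L', hL'L, hL'card⟩ := Finset.exists_subset_card_eq (show k + 1 ≤ L.card from hlt)
  obtain ⟨l, hl⟩ : L'.Nonempty := Finset.card_pos.mp (by omega)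
  obtain ⟨hline, hl₁, hl₂⟩ := hL l (hL'L hl)
  obtain ⟨x, hx⟩ := hline.infinite.nonempty
  have hd₁ := totalDegree_pos_of_eval_eq_zero h₁ (hl₁ hx)
  have hd₂ := totalDegree_pos_of_eval_eq_zero h₂ (hl₂ hx)
  have hk : 1 ≤ k := Nat.mul_le_mul hd₁ hd₂
  have hD : p₁.totalDegree + p₂.totalDegree ≤ k + k ^ 2 := by
    nlinarith [Nat.le_self_pow two_ne_zero k]
  obtain ⟨Q, hQcard, hQL, hQsep⟩ :=
    exists_finset_separatedInDegree_of_isLine L' (fun l hl => (hL l (hL'L hl)).1) (k ^ 2 + 1)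
  rw [hL'card, Nat.add_sub_cancel, Nat.add_sub_cancel] at hQsep
  have hvanish : ∀ x ∈ Q, eval x p₁ = 0 ∧ eval x p₂ = 0 := fun x hx => by
    obtain ⟨l, hl, hxl⟩ := hQL x hx
    exact ⟨(hL l (hL'L hl)).2.1 hxl, (hL l (hL'L hl)).2.2 hxl⟩
  have hcount := card_add_finrank_le_of_separatedInDegree h₁ h₂ hrp hD
    (fun x hx => (hvanish x hx).1) (fun x hx => (hvanish x hx).2) hQsep
  simp only [finrank_restrictTotalDegree_fin_three, hQcard, hL'card] at hcount
  have hchoose := Nat.choose_three_second_difference_le hd₁ hd₂ hD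
  nlinarith

/-- If `p₁, p₂ ∈ ℝ[x,y,z]` are nonzero with no common irreducible factor,
then at most `deg p₁ · deg p₂` lines are simultaneously contained in both zero sets. -/
theorem common_lines_le_prod_deg (p₁ p₂ : MvPolynomial (Fin 3) ℝ)
    (h₁ : p₁ ≠ 0) (h₂ : p₂ ≠ 0)
    (hcop : ∀ q : MvPolynomial (Fin 3) ℝ, Irreducible q → q ∣ p₁ → ¬ q ∣ p₂) :
    {l : Set (Fin 3 → ℝ) | IsLine l ∧ l ⊆ {x | eval x p₁ = 0} ∧
        l ⊆ {x | eval x p₂ = 0}}.Finite ∧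
      {l : Set (Fin 3 → ℝ) | IsLine l ∧ l ⊆ {x | eval x p₁ = 0} ∧
        l ⊆ {x | eval x p₂ = 0}}.ncard ≤ p₁.totalDegree * p₂.totalDegree := by
  have hrp : IsRelPrime p₁ p₂ :=
    WfDvdMonoid.isRelPrime_of_no_irreducible_factors (fun h => h₁ h.1) hcop
  exact Set.finite_and_ncard_le_of_forall_finset_card_le fun L hL =>
    card_le_totalDegree_mul_of_isLine h₁ h₂ hrp L fun l hl => hL hl
end

section
/- Suppose that for all finite collections L₁, L₂, L₃ of lines in ℝ³, the number of multijoints satisfies |J(L₁,L₂,L₃)| ≤ C·(|L₁||L₂||L₃|)^{1/2}. Fix finite collections L₁, L₂, L₃ and positive integers N₁, N₂, N₃, and let J_{N₁,N₂,N₃} be the set of points x such that for each i there is a subcollection Lᵢ(x) ⊆ Lᵢ of at least Nᵢ lines through x, with the three subcollections transversal (any choice of one line from each has directions spanning ℝ³). Then |J_{N₁,N₂,N₃}(L₁,L₂,L₃)| ≤ C'·(|L₁||L₂||L₃|)^{1/2}/(N₁N₂N₃)^{1/2} for an absolute constant C' depending only on C. -/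
/-!
Colour every line of `Lᵢ` uniformly at random with `Nᵢ` colours and keep the lines of colour `0`.
A point of `J_{N₁,N₂,N₃}` stays a multijoint of the kept lines as soon as each of its three
transversal subcollections keeps a line; since these have at least `Nᵢ` lines, this happens with
probability at least `1 - (1 - 1/Nᵢ)^{Nᵢ} ≥ 1 - e⁻¹ ≥ 1/2` for each `i`, hence at least `1/8`.
On the other hand, by Cauchy–Schwarz the kept collections satisfy `𝔼 √|sample of Lᵢ| ≤ √(|Lᵢ|/Nᵢ)`,
so averaging the hypothesis over all colourings gives
`|J_{N₁,N₂,N₃}| / 8 ≤ C · √(|L₁||L₂||L₃| / (N₁N₂N₃))`.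
Expectations are written as sums over the `N ^ |L|` colourings. Multijoint sets are finite, since
two lines with independent directions meet at most once; this matters because `Set.ncard` of an
infinite set is `0`.
-/

open scoped Classical

/-- A line in `ℝ³`, given by a base point and a nonzero direction vector. -/
structure Line3 where
  pt : Fin 3 → ℝ
  dir : Fin 3 → ℝ
  dir_ne : dir ≠ 0

/-- The set of points of a line. -/
def Line3.carrier (l : Line3) : Set (Fin 3 → ℝ) := {x | ∃ t : ℝ, x = l.pt + t • l.dir}

/-- Three lines whose directions span `ℝ³`. -/
def Spans (l₁ l₂ l₃ : Line3) : Prop :=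
  Submodule.span ℝ ({l₁.dir, l₂.dir, l₃.dir} : Set (Fin 3 → ℝ)) = ⊤

/-- The set of multijoints formed by three collections of lines: points lying on a line of
each collection, the three directions spanning `ℝ³`. -/
def multijointSet (L₁ L₂ L₃ : Finset Line3) : Set (Fin 3 → ℝ) :=
  {x | ∃ l₁ ∈ L₁, ∃ l₂ ∈ L₂, ∃ l₃ ∈ L₃,
    x ∈ l₁.carrier ∧ x ∈ l₂.carrier ∧ x ∈ l₃.carrier ∧ Spans l₁ l₂ l₃}

/-- The set of multijoints with multiplicities at least `N₁, N₂, N₃`: points admitting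
transversal subcollections `Sᵢ ⊆ Lᵢ` of lines through the point with `|Sᵢ| ≥ Nᵢ`. -/
def multijointSetN (L₁ L₂ L₃ : Finset Line3) (N₁ N₂ N₃ : ℕ) : Set (Fin 3 → ℝ) :=
  {x | ∃ S₁ S₂ S₃ : Finset Line3, S₁ ⊆ L₁ ∧ S₂ ⊆ L₂ ∧ S₃ ⊆ L₃ ∧
    N₁ ≤ S₁.card ∧ N₂ ≤ S₂.card ∧ N₃ ≤ S₃.card ∧
    (∀ l ∈ S₁, x ∈ l.carrier) ∧ (∀ l ∈ S₂, x ∈ l.carrier) ∧ (∀ l ∈ S₃, x ∈ l.carrier) ∧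
    ∀ l₁ ∈ S₁, ∀ l₂ ∈ S₂, ∀ l₃ ∈ S₃, Spans l₁ l₂ l₃}

open Finset

lemma one_sub_inv_pow_le_half {N t : ℕ} (hN : 0 < N) (ht : N ≤ t) :
    (1 - (N : ℝ)⁻¹) ^ t ≤ 1 / 2 := by
  have h0 : 0 ≤ 1 - (N : ℝ)⁻¹ := sub_nonneg.2 (inv_le_one_of_one_le₀ (by exact_mod_cast hN))
  calc (1 - (N : ℝ)⁻¹) ^ t ≤ (1 - (N : ℝ)⁻¹) ^ N :=
        pow_le_pow_of_le_one h0 (sub_le_self _ (by positivity)) ht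
    _ ≤ Real.exp (-1) := by
        simpa [one_div] using Real.one_sub_div_pow_le_exp_neg (n := N) (t := 1)
          (by exact_mod_cast hN)
    _ ≤ 1 / 2 := by
        rw [Real.exp_neg, one_div]
        exact inv_anti₀ two_pos Real.exp_one_gt_two.le

section Coloring

variable {ι : Type*} [Fintype ι] [DecidableEq ι] {N : ℕ}

lemma card_filter_forall_mem (T : Finset ι) (A : Finset (Fin N)) :
    #{f : ι → Fin N | ∀ i ∈ T, f i ∈ A} = #A ^ #T * N ^ (Fintype.card ι - #T) := by
  have hpi : ({f : ι → Fin N | ∀ i ∈ T, f i ∈ A} : Finset _) =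
      Fintype.piFinset fun i => if i ∈ T then A else univ := by
    ext f
    simp only [mem_filter, mem_univ, true_and, Fintype.mem_piFinset]
    refine forall_congr' fun i => ?_
    split_ifs <;> simp [*]
  rw [hpi, Fintype.card_piFinset]
  simp_rw [apply_ite card, card_univ, Fintype.card_fin]
  rw [prod_ite, prod_const, prod_const, filter_univ_mem, ← card_compl, filter_not,
    filter_univ_mem, compl_eq_univ_sdiff]

variable [NeZero N]

lemma card_filter_forall_ne_zero (T : Finset ι) :
    #{f : ι → Fin N | ∀ i ∈ T, f i ≠ 0} = (N - 1) ^ #T * N ^ (Fintype.card ι - #T) := by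
  simpa using card_filter_forall_mem T (univ.erase (0 : Fin N))

lemma card_filter_apply_eq_zero (i : ι) :
    #{f : ι → Fin N | f i = 0} = N ^ (Fintype.card ι - 1) := by
  simpa using card_filter_forall_mem {i} ({0} : Finset (Fin N))

lemma sum_card_filter_eq_zero :
    ∑ f : ι → Fin N, #{i | f i = 0} = Fintype.card ι * N ^ (Fintype.card ι - 1) := by
  have := sum_card_bipartiteAbove_eq_sum_card_bipartiteBelow (s := univ) (t := univ)
    (fun (f : ι → Fin N) i => f i = 0)
  simp only [bipartiteAbove, bipartiteBelow] at this
  simp [this, card_filter_apply_eq_zero]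

lemma pow_card_le_two_mul_card_filter_exists_eq_zero {T : Finset ι} (hT : N ≤ #T) :
    (N : ℝ) ^ Fintype.card ι ≤ 2 * #{f : ι → Fin N | ∃ i ∈ T, f i = 0} := by
  have hN : 0 < N := Nat.pos_of_neZero N
  have hsplit : #{f : ι → Fin N | ∃ i ∈ T, f i = 0} + #{f : ι → Fin N | ∀ i ∈ T, f i ≠ 0} =
      N ^ Fintype.card ι := by
    simpa using card_filter_add_card_filter_not
      (s := (univ : Finset (ι → Fin N))) (p := fun f => ∃ i ∈ T, f i = 0)
  have hmiss : (#{f : ι → Fin N | ∀ i ∈ T, f i ≠ 0} : ℝ) ≤ (N : ℝ) ^ Fintype.card ι / 2 := by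
    have hT' : #T ≤ Fintype.card ι := card_le_univ T
    calc (#{f : ι → Fin N | ∀ i ∈ T, f i ≠ 0} : ℝ)
        = (1 - (N : ℝ)⁻¹) ^ #T * (N : ℝ) ^ Fintype.card ι := by
          rw [card_filter_forall_ne_zero, ← Nat.add_sub_cancel' hT']
          push_cast [Nat.one_le_iff_ne_zero.2 (NeZero.ne N)]
          rw [Nat.add_sub_cancel_left, pow_add, ← mul_assoc, ← mul_pow, sub_mul,
            inv_mul_cancel₀ (by positivity), one_mul]
      _ ≤ 1 / 2 * (N : ℝ) ^ Fintype.card ι := by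
          gcongr; exact one_sub_inv_pow_le_half hN hT
      _ = (N : ℝ) ^ Fintype.card ι / 2 := by ring
  have := congrArg (Nat.cast : ℕ → ℝ) hsplit
  push_cast at this
  linarith

lemma sum_sqrt_card_filter_eq_zero_le :
    ∑ f : ι → Fin N, √(#{i | f i = 0} : ℝ) ≤
      (N : ℝ) ^ Fintype.card ι * √(Fintype.card ι / N) := by
  have hcs := Real.sum_sqrt_mul_sqrt_le (univ : Finset (ι → Fin N)) (f := fun _ => 1)
    (g := fun f => (#{i | f i = 0} : ℝ)) (fun _ => zero_le_one) (fun _ => Nat.cast_nonneg _)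
  have hsum : ∑ f : ι → Fin N, (#{i | f i = 0} : ℝ) =
      (N : ℝ) ^ Fintype.card ι * (Fintype.card ι / N) := by
    rw [← Nat.cast_sum, sum_card_filter_eq_zero]
    have : (N : ℝ) ≠ 0 := NeZero.ne _
    cases Fintype.card ι with
    | zero => simp
    | succ n =>
      push_cast
      field_simp
      ring
  simp only [Real.sqrt_one, one_mul, sum_const, card_univ, Fintype.card_fun, Fintype.card_fin,
    nsmul_one, hsum, Nat.cast_pow] at hcs
  rw [Real.sqrt_mul (by positivity), ← mul_assoc, ← Real.sqrt_mul (by positivity),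
    Real.sqrt_mul_self (by positivity)] at hcs
  exact_mod_cast hcs

end Coloring

lemma Spans.linearIndependent {l₁ l₂ l₃ : Line3} (h : Spans l₁ l₂ l₃) :
    LinearIndependent ℝ ![l₁.dir, l₂.dir, l₃.dir] :=
  linearIndependent_of_top_le_span_of_card_eq_finrank
    (by rw [Matrix.range_cons, Matrix.range_cons_cons_empty, Set.singleton_union]; exact h.ge)
    (by simp)

lemma Spans.carrier_inter_subsingleton {l₁ l₂ l₃ : Line3} (h : Spans l₁ l₂ l₃) :
    (l₁.carrier ∩ l₂.carrier).Subsingleton := by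
  rintro x ⟨⟨t, rfl⟩, s, hs⟩ y ⟨⟨t', rfl⟩, s', hs'⟩
  have hrel : (t - t') • l₁.dir + (s' - s) • l₂.dir + (0 : ℝ) • l₃.dir = 0 := by
    rw [sub_smul, sub_smul, zero_smul, add_zero]
    linear_combination (norm := module) hs - hs'
  have := Fintype.linearIndependent_iff.1 h.linearIndependent ![t - t', s' - s, 0]
    (by simpa [Fin.sum_univ_three] using hrel) 0
  simp only [Matrix.cons_val_zero, sub_eq_zero] at this
  rw [this]

lemma multijointSet_finite (L₁ L₂ L₃ : Finset Line3) : (multijointSet L₁ L₂ L₃).Finite := by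
  refine ((L₁ ×ˢ L₂ ×ˢ L₃).finite_toSet.biUnion fun l _ =>
    Set.Subsingleton.finite (s := {x | x ∈ l.1.carrier ∧ x ∈ l.2.1.carrier ∧
      Spans l.1 l.2.1 l.2.2}) ?_).subset ?_
  · rintro x ⟨hx₁, hx₂, hl⟩ y ⟨hy₁, hy₂, -⟩
    exact hl.carrier_inter_subsingleton ⟨hx₁, hx₂⟩ ⟨hy₁, hy₂⟩
  · rintro x ⟨l₁, h₁, l₂, h₂, l₃, h₃, hx₁, hx₂, -, hl⟩
    exact Set.mem_biUnion (x := (l₁, l₂, l₃)) (by simp [h₁, h₂, h₃]) ⟨hx₁, hx₂, hl⟩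

lemma multijointSetN_subset_multijointSet {L₁ L₂ L₃ : Finset Line3} {N₁ N₂ N₃ : ℕ}
    (h₁ : 0 < N₁) (h₂ : 0 < N₂) (h₃ : 0 < N₃) :
    multijointSetN L₁ L₂ L₃ N₁ N₂ N₃ ⊆ multijointSet L₁ L₂ L₃ := by
  rintro x ⟨S₁, S₂, S₃, hs₁, hs₂, hs₃, hc₁, hc₂, hc₃, hm₁, hm₂, hm₃, hsp⟩
  obtain ⟨l₁, hl₁⟩ := card_pos.1 (h₁.trans_le hc₁)
  obtain ⟨l₂, hl₂⟩ := card_pos.1 (h₂.trans_le hc₂)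
  obtain ⟨l₃, hl₃⟩ := card_pos.1 (h₃.trans_le hc₃)
  exact ⟨l₁, hs₁ hl₁, l₂, hs₂ hl₂, l₃, hs₃ hl₃, hm₁ _ hl₁, hm₂ _ hl₂, hm₃ _ hl₃,
    hsp _ hl₁ _ hl₂ _ hl₃⟩

section Sample

variable {α : Type*} {N : ℕ} [NeZero N]

def sample (L : Finset α) (f : L → Fin N) : Finset α :=
  ({i | f i = 0} : Finset L).map (Function.Embedding.subtype _)

lemma mem_sample {L : Finset α} {f : L → Fin N} {a : α} :
    a ∈ sample L f ↔ ∃ h : a ∈ L, f ⟨a, h⟩ = 0 := by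
  simp [sample]

lemma card_sample (L : Finset α) (f : L → Fin N) : #(sample L f) = #{i | f i = 0} :=
  card_map _

lemma sum_sqrt_card_sample_le (L : Finset α) :
    ∑ f : L → Fin N, √(#(sample L f) : ℝ) ≤ (N : ℝ) ^ #L * √(#L / N) := by
  simpa only [card_sample, Fintype.card_coe] using
    sum_sqrt_card_filter_eq_zero_le (ι := L) (N := N)

lemma pow_card_le_two_mul_card_filter_exists_mem_sample {L S : Finset α} (hS : S ⊆ L)
    (hN : N ≤ #S) : (N : ℝ) ^ #L ≤ 2 * #{f : L → Fin N | ∃ a ∈ S, a ∈ sample L f} := by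
  have hT : #(S.subtype (· ∈ L)) = #S := by
    rw [card_subtype, filter_true_of_mem fun _ h => hS h]
  have := pow_card_le_two_mul_card_filter_exists_eq_zero (N := N) (hT.symm ▸ hN)
  rw [Fintype.card_coe] at this
  refine this.trans ?_
  gcongr with f
  rintro ⟨⟨a, ha⟩, haS, hf⟩
  exact ⟨a, mem_subtype.1 haS, mem_sample.2 ⟨ha, hf⟩⟩

end Sample

section SampledMultijoints

variable {N₁ N₂ N₃ : ℕ} [NeZero N₁] [NeZero N₂] [NeZero N₃] {L₁ L₂ L₃ : Finset Line3}

def sampledMultijointSet (L₁ L₂ L₃ : Finset Line3)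
    (ω : (L₁ → Fin N₁) × (L₂ → Fin N₂) × (L₃ → Fin N₃)) : Set (Fin 3 → ℝ) :=
  multijointSet (sample L₁ ω.1) (sample L₂ ω.2.1) (sample L₃ ω.2.2)

lemma pow_card_le_eight_mul_card_filter_mem_sampledMultijointSet {x : Fin 3 → ℝ}
    (hx : x ∈ multijointSetN L₁ L₂ L₃ N₁ N₂ N₃) :
    (N₁ : ℝ) ^ #L₁ * N₂ ^ #L₂ * N₃ ^ #L₃ ≤
      8 * #{ω : (L₁ → Fin N₁) × (L₂ → Fin N₂) × (L₃ → Fin N₃) |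
        x ∈ sampledMultijointSet L₁ L₂ L₃ ω} := by
  obtain ⟨S₁, S₂, S₃, hs₁, hs₂, hs₃, hc₁, hc₂, hc₃, hm₁, hm₂, hm₃, hsp⟩ := hx
  have hmeets : ({f : L₁ → Fin N₁ | ∃ l ∈ S₁, l ∈ sample L₁ f} : Finset _) ×ˢ
      ({f : L₂ → Fin N₂ | ∃ l ∈ S₂, l ∈ sample L₂ f} : Finset _) ×ˢ
      ({f : L₃ → Fin N₃ | ∃ l ∈ S₃, l ∈ sample L₃ f} : Finset _) ⊆
      ({ω | x ∈ sampledMultijointSet L₁ L₂ L₃ ω} : Finset _) := by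
    simp only [subset_iff, mem_product, mem_filter, mem_univ, true_and]
    rintro ω ⟨⟨l₁, h₁, hl₁⟩, ⟨l₂, h₂, hl₂⟩, ⟨l₃, h₃, hl₃⟩⟩
    exact ⟨l₁, hl₁, l₂, hl₂, l₃, hl₃, hm₁ _ h₁, hm₂ _ h₂, hm₃ _ h₃, hsp _ h₁ _ h₂ _ h₃⟩
  have hcard := card_le_card hmeets
  rw [card_product, card_product] at hcard
  have e₁ := pow_card_le_two_mul_card_filter_exists_mem_sample hs₁ hc₁
  have e₂ := pow_card_le_two_mul_card_filter_exists_mem_sample hs₂ hc₂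
  have e₃ := pow_card_le_two_mul_card_filter_exists_mem_sample hs₃ hc₃
  calc (N₁ : ℝ) ^ #L₁ * N₂ ^ #L₂ * N₃ ^ #L₃
      ≤ (2 * #{f : L₁ → Fin N₁ | ∃ l ∈ S₁, l ∈ sample L₁ f}) *
        (2 * #{f : L₂ → Fin N₂ | ∃ l ∈ S₂, l ∈ sample L₂ f}) *
        (2 * #{f : L₃ → Fin N₃ | ∃ l ∈ S₃, l ∈ sample L₃ f}) := by gcongr
    _ ≤ _ := by
      have := (Nat.cast_le (α := ℝ)).2 hcard
      push_cast at this
      linarith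

lemma ncard_multijointSetN_mul_le_sum :
    ((multijointSetN L₁ L₂ L₃ N₁ N₂ N₃).ncard : ℝ) * ((N₁ : ℝ) ^ #L₁ * N₂ ^ #L₂ * N₃ ^ #L₃) ≤
      8 * ∑ ω : (L₁ → Fin N₁) × (L₂ → Fin N₂) × (L₃ → Fin N₃),
        ((sampledMultijointSet L₁ L₂ L₃ ω).ncard : ℝ) := by
  have hJ := (multijointSet_finite L₁ L₂ L₃).subset (multijointSetN_subset_multijointSet
    (Nat.pos_of_neZero N₁) (Nat.pos_of_neZero N₂) (Nat.pos_of_neZero N₃))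
  rw [Set.ncard_eq_toFinset_card _ hJ]
  set J := hJ.toFinset
  calc (#J : ℝ) * ((N₁ : ℝ) ^ #L₁ * N₂ ^ #L₂ * N₃ ^ #L₃)
      ≤ ∑ x ∈ J, 8 * (#{ω : (L₁ → Fin N₁) × (L₂ → Fin N₂) × (L₃ → Fin N₃) |
        x ∈ sampledMultijointSet L₁ L₂ L₃ ω} : ℝ) := by
        rw [← nsmul_eq_mul]
        exact card_nsmul_le_sum _ _ _ fun x hx =>
          pow_card_le_eight_mul_card_filter_mem_sampledMultijointSet (hJ.mem_toFinset.1 hx)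
    _ = 8 * ∑ ω : (L₁ → Fin N₁) × (L₂ → Fin N₂) × (L₃ → Fin N₃),
        (#{x ∈ J | x ∈ sampledMultijointSet L₁ L₂ L₃ ω} : ℝ) := by
        rw [← mul_sum]
        congr 1
        exact_mod_cast sum_card_bipartiteAbove_eq_sum_card_bipartiteBelow (s := J) (t := univ)
          (fun x ω => x ∈ sampledMultijointSet L₁ L₂ L₃ ω)
    _ ≤ _ := by
        gcongr with ω
        rw [← Set.ncard_coe_finset, coe_filter]
        exact_mod_cast Set.ncard_le_ncard (Set.sep_subset_ofPred _ _) (multijointSet_finite _ _ _)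

lemma sum_sqrt_card_sample_mul_le (L₁ L₂ L₃ : Finset Line3) :
    ∑ ω : (L₁ → Fin N₁) × (L₂ → Fin N₂) × (L₃ → Fin N₃),
      √((#(sample L₁ ω.1) : ℝ) * #(sample L₂ ω.2.1) * #(sample L₃ ω.2.2)) ≤
      ((N₁ : ℝ) ^ #L₁ * N₂ ^ #L₂ * N₃ ^ #L₃) * √((#L₁ * #L₂ * #L₃ : ℝ) / (N₁ * N₂ * N₃)) := by
  calc _ = (∑ f₁ : L₁ → Fin N₁, √(#(sample L₁ f₁) : ℝ)) *
        (∑ f₂ : L₂ → Fin N₂, √(#(sample L₂ f₂) : ℝ)) *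
        (∑ f₃ : L₃ → Fin N₃, √(#(sample L₃ f₃) : ℝ)) := by
        simp only [Fintype.sum_prod_type, Nat.cast_nonneg, Real.sqrt_mul', ← mul_sum, ← sum_mul]
    _ ≤ ((N₁ : ℝ) ^ #L₁ * √(#L₁ / N₁)) * ((N₂ : ℝ) ^ #L₂ * √(#L₂ / N₂)) *
        ((N₃ : ℝ) ^ #L₃ * √(#L₃ / N₃)) := by
        gcongr <;> first | positivity | exact sum_sqrt_card_sample_le _
    _ = _ := by
        rw [mul_div_mul_comm, mul_div_mul_comm, Real.sqrt_mul (by positivity),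
          Real.sqrt_mul (by positivity)]
        ring

end SampledMultijoints

lemma nonneg_of_forall_ncard_multijointSet_le {C : ℝ}
    (hC : ∀ L₁ L₂ L₃ : Finset Line3,
      ((multijointSet L₁ L₂ L₃).ncard : ℝ) ≤ C * √((#L₁ : ℝ) * #L₂ * #L₃)) : 0 ≤ C := by
  let l : Line3 := ⟨0, 1, one_ne_zero⟩
  simpa using (Nat.cast_nonneg _).trans (hC {l} {l} {l})

/-- If the multijoints bound `|J(L₁,L₂,L₃)| ≤ C·(|L₁||L₂||L₃|)^{1/2}` holds for
all finite collections of lines in `ℝ³`, then for all collections and positive integers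
`N₁, N₂, N₃`, `|J_{N₁,N₂,N₃}(L₁,L₂,L₃)| ≤ C'·(|L₁||L₂||L₃|)^{1/2}/(N₁N₂N₃)^{1/2}` for a
constant `C'` depending only on `C`. -/
theorem multijoint_multiplicity_of_plain (C : ℝ)
    (hC : ∀ L₁ L₂ L₃ : Finset Line3,
      ((multijointSet L₁ L₂ L₃).ncard : ℝ) ≤
        C * Real.sqrt ((L₁.card : ℝ) * L₂.card * L₃.card)) :
    ∃ C' : ℝ, 0 < C' ∧ ∀ (L₁ L₂ L₃ : Finset Line3) (N₁ N₂ N₃ : ℕ),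
      0 < N₁ → 0 < N₂ → 0 < N₃ →
      ((multijointSetN L₁ L₂ L₃ N₁ N₂ N₃).ncard : ℝ) ≤
        C' * Real.sqrt ((L₁.card : ℝ) * L₂.card * L₃.card) /
          Real.sqrt ((N₁ : ℝ) * N₂ * N₃) := by
  have hC₀ := nonneg_of_forall_ncard_multijointSet_le hC
  refine ⟨8 * C + 1, by positivity, fun L₁ L₂ L₃ N₁ N₂ N₃ h₁ h₂ h₃ => ?_⟩
  have : NeZero N₁ := ⟨h₁.ne'⟩
  have : NeZero N₂ := ⟨h₂.ne'⟩
  have : NeZero N₃ := ⟨h₃.ne'⟩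
  set M : ℝ := (N₁ : ℝ) ^ #L₁ * N₂ ^ #L₂ * N₃ ^ #L₃
  set ρ := √((#L₁ * #L₂ * #L₃ : ℝ) / (N₁ * N₂ * N₃))
  have hJ : ((multijointSetN L₁ L₂ L₃ N₁ N₂ N₃).ncard : ℝ) * M ≤ 8 * C * ρ * M :=
    calc _ ≤ 8 * ∑ ω : (L₁ → Fin N₁) × (L₂ → Fin N₂) × (L₃ → Fin N₃),
          ((sampledMultijointSet L₁ L₂ L₃ ω).ncard : ℝ) := ncard_multijointSetN_mul_le_sum
      _ ≤ 8 * ∑ ω : (L₁ → Fin N₁) × (L₂ → Fin N₂) × (L₃ → Fin N₃),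
          C * √((#(sample L₁ ω.1) : ℝ) * #(sample L₂ ω.2.1) * #(sample L₃ ω.2.2)) := by
          gcongr with ω
          exact hC _ _ _
      _ ≤ 8 * C * (M * ρ) := by
          rw [← mul_sum, ← mul_assoc]
          gcongr
          exact sum_sqrt_card_sample_mul_le L₁ L₂ L₃
      _ = 8 * C * ρ * M := by ring
  rw [mul_div_assoc, ← Real.sqrt_div' _ (by positivity)]
  calc _ ≤ 8 * C * ρ := le_of_mul_le_mul_right hJ (by positivity)
    _ ≤ (8 * C + 1) * ρ := by gcongr; linarith
end
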